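/- arXiv:1210.7337 — 3 statements merged into one kernel-verified Lean document; each statement's English description precedes it below -/
import Mathlib

section
/- Let V : [0,H] × [0,T) → ℝ be smooth with V(0,t) = V(H,t) = 0 and suppose V satisfies V_{tz} − 2W̄_z V_z + V·W̄_{zz} + W̄·V_{zz} + (4/H)∫₀ᴴ W̄_z V_z dz = 0, where W̄ is smooth with W̄(0,t) = W̄(H,t) = 0. Then (1/2)(d/dt)∫₀ᴴ V_z(z,t)² dz = (5/2)∫₀ᴴ W̄_z (V_z)² dz − ∫₀ᴴ W̄_{zz} V V_z dz. -/
open Real Set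

open MeasureTheory Metric Function intervalIntegral

private lemma hasDerivAt_pfst {F : ℝ → ℝ → ℝ} (hF : ContDiff ℝ (⊤ : ℕ∞) (uncurry F)) (z t : ℝ) :
    HasDerivAt (fun y => F y t) (fderiv ℝ (uncurry F) (z, t) (1, 0)) z := by
  have h1 : HasFDerivAt (uncurry F) (fderiv ℝ (uncurry F) (z, t)) (z, t) :=
    (hF.differentiable (by simp) (z, t)).hasFDerivAt
  have h2 : HasDerivAt (fun y : ℝ => (y, t)) ((1:ℝ), (0:ℝ)) z :=
    (hasDerivAt_id z).prodMk (hasDerivAt_const z t)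
  exact h1.comp_hasDerivAt z h2

private lemma hasDerivAt_psnd {F : ℝ → ℝ → ℝ} (hF : ContDiff ℝ (⊤ : ℕ∞) (uncurry F)) (z t : ℝ) :
    HasDerivAt (fun s => F z s) (fderiv ℝ (uncurry F) (z, t) (0, 1)) t := by
  have h1 : HasFDerivAt (uncurry F) (fderiv ℝ (uncurry F) (z, t)) (z, t) :=
    (hF.differentiable (by simp) (z, t)).hasFDerivAt
  have h2 : HasDerivAt (fun s : ℝ => (z, s)) ((0:ℝ), (1:ℝ)) t :=
    (hasDerivAt_const t z).prodMk (hasDerivAt_id t)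
  exact h1.comp_hasDerivAt t h2

private lemma contDiff_pfst {F : ℝ → ℝ → ℝ} (hF : ContDiff ℝ (⊤ : ℕ∞) (uncurry F)) :
    ContDiff ℝ (⊤ : ℕ∞) (uncurry fun z t => deriv (fun y => F y t) z) := by
  have h : (uncurry fun z t => deriv (fun y => F y t) z)
      = fun p : ℝ × ℝ => fderiv ℝ (uncurry F) p (1, 0) := by
    funext p
    exact (hasDerivAt_pfst hF p.1 p.2).deriv
  rw [h]
  exact (hF.fderiv_right (by simp)).clm_apply contDiff_const

private lemma contDiff_psnd {F : ℝ → ℝ → ℝ} (hF : ContDiff ℝ (⊤ : ℕ∞) (uncurry F)) :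
    ContDiff ℝ (⊤ : ℕ∞) (uncurry fun z t => deriv (fun s => F z s) t) := by
  have h : (uncurry fun z t => deriv (fun s => F z s) t)
      = fun p : ℝ × ℝ => fderiv ℝ (uncurry F) p (0, 1) := by
    funext p
    exact (hasDerivAt_psnd hF p.1 p.2).deriv
  rw [h]
  exact (hF.fderiv_right (by simp)).clm_apply contDiff_const

private lemma sect1 {F : ℝ → ℝ → ℝ} (hF : ContDiff ℝ (⊤ : ℕ∞) (uncurry F)) (t : ℝ) :
    ContDiff ℝ (⊤ : ℕ∞) (fun z => F z t) :=
  hF.comp (contDiff_id.prodMk contDiff_const)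

private lemma sect2 {F : ℝ → ℝ → ℝ} (hF : ContDiff ℝ (⊤ : ℕ∞) (uncurry F)) (z : ℝ) :
    ContDiff ℝ (⊤ : ℕ∞) (fun s => F z s) :=
  hF.comp (contDiff_const.prodMk contDiff_id)

open intervalIntegral in
private lemma hasDerivAt_int {G : ℝ → ℝ → ℝ} (hG : ContDiff ℝ (⊤ : ℕ∞) (uncurry G)) (a b t : ℝ) :
    HasDerivAt (fun s => ∫ z in a..b, G z s)
      (∫ z in a..b, deriv (fun s => G z s) t) t := by
  set Gt : ℝ → ℝ → ℝ := fun z s => deriv (fun s' => G z s') s with hGt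
  have hGtc : Continuous (uncurry Gt) := (contDiff_psnd hG).continuous
  -- bound on compact set
  obtain ⟨C, hC⟩ := (((isCompact_uIcc (a := a) (b := b)).prod
      (isCompact_Icc (a := t - 1) (b := t + 1)))).exists_bound_of_continuousOn
      (hGtc.continuousOn)
  have main := hasDerivAt_integral_of_dominated_loc_of_deriv_le (𝕜 := ℝ)
      (F := fun s z => G z s) (F' := fun s z => Gt z s) (x₀ := t)
      (bound := fun _ => C) (a := a) (b := b) (μ := volume) (ball_mem_nhds t one_pos)
      (Filter.Eventually.of_forall fun s =>
        ((sect1 hG s).continuous.aestronglyMeasurable))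
      (((sect1 hG t).continuous).intervalIntegrable a b)
      ((hGtc.comp (continuous_id.prodMk continuous_const)).aestronglyMeasurable)
      (MeasureTheory.ae_of_all _ fun z hz s hs => by
        have hz' : z ∈ uIcc a b := uIoc_subset_uIcc hz
        have hs' : s ∈ Icc (t - 1) (t + 1) := by
          have := mem_ball_iff_norm.mp hs
          constructor <;> [linarith [neg_le_of_abs_le (le_of_lt this)];
            linarith [le_of_abs_le (le_of_lt this)]]
        exact hC (z, s) (mem_prod.mpr ⟨hz', hs'⟩))
      (intervalIntegrable_const)
      (MeasureTheory.ae_of_all _ fun z hz s _ =>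
        ((sect2 hG z).differentiable (by simp) s).hasDerivAt)
  exact main.2

private lemma key (H : ℝ) (hH : 0 < H) (V Wb Vz Vzz Vzt Wz Wzz : ℝ → ℝ)
    (hVd : ∀ z, HasDerivAt V (Vz z) z)
    (hVzd : ∀ z, HasDerivAt Vz (Vzz z) z)
    (hWd : ∀ z, HasDerivAt Wb (Wz z) z)
    (cV : Continuous V) (cVz : Continuous Vz) (cVzz : Continuous Vzz)
    (cWb : Continuous Wb) (cWz : Continuous Wz) (cWzz : Continuous Wzz)
    (cVzt : Continuous Vzt)
    (hV0 : V 0 = 0) (hVH : V H = 0) (hW0 : Wb 0 = 0) (hWH : Wb H = 0)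
    (heq : ∀ z ∈ Icc (0:ℝ) H,
      Vzt z = 2 * Wz z * Vz z - V z * Wzz z - Wb z * Vzz z
        - (4 / H) * ∫ y in (0:ℝ)..H, Wz y * Vz y) :
    (1/2) * ∫ z in (0:ℝ)..H, 2 * Vz z * Vzt z
      = (5/2) * (∫ z in (0:ℝ)..H, Wz z * (Vz z)^2)
        - ∫ z in (0:ℝ)..H, Wzz z * V z * Vz z := by
  set A := ∫ z in (0:ℝ)..H, Wz z * (Vz z)^2 with hA
  set B := ∫ z in (0:ℝ)..H, Wzz z * V z * Vz z with hB
  set Cc := ∫ z in (0:ℝ)..H, Wb z * (Vz z * Vzz z) with hCc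
  set I := ∫ y in (0:ℝ)..H, Wz y * Vz y with hI
  have hUIcc : uIcc (0:ℝ) H = Icc 0 H := uIcc_of_le hH.le
  -- integrabilities
  have i1 : IntervalIntegrable (fun z => Wz z * (Vz z)^2) volume 0 H :=
    (cWz.mul (cVz.pow 2)).intervalIntegrable _ _
  have i2 : IntervalIntegrable (fun z => Wzz z * V z * Vz z) volume 0 H :=
    ((cWzz.mul cV).mul cVz).intervalIntegrable _ _
  have i3 : IntervalIntegrable (fun z => Wb z * (Vz z * Vzz z)) volume 0 H :=
    (cWb.mul (cVz.mul cVzz)).intervalIntegrable _ _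
  have i4 : IntervalIntegrable Vz volume 0 H := cVz.intervalIntegrable _ _
  -- FTC : integral of Vz is zero
  have hD : ∫ z in (0:ℝ)..H, Vz z = 0 := by
    have := integral_eq_sub_of_hasDerivAt (f := V) (f' := Vz)
      (fun z _ => hVd z) i4
    rw [this, hVH, hV0, sub_zero]
  -- integration by parts : A + 2 * Cc = 0
  have hAC : A + 2 * Cc = 0 := by
    have hprod : ∀ z, HasDerivAt (fun y => Wb y * (Vz y)^2)
        (Wz z * (Vz z)^2 + Wb z * (2 * Vz z * Vzz z)) z := by
      intro z
      have := (hWd z).fun_mul ((hVzd z).fun_pow 2)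
      refine this.congr_deriv ?_
      push_cast
      ring
    have hp : ∫ z in (0:ℝ)..H, (Wz z * (Vz z)^2 + Wb z * (2 * Vz z * Vzz z)) = 0 := by
      have := integral_eq_sub_of_hasDerivAt (a := (0:ℝ)) (b := H)
        (f := fun y => Wb y * (Vz y)^2)
        (f' := fun z => Wz z * (Vz z)^2 + Wb z * (2 * Vz z * Vzz z))
        (fun z _ => hprod z)
        (((cWz.mul (cVz.pow 2)).add
          (cWb.mul ((continuous_const.mul cVz).mul cVzz))).intervalIntegrable _ _)
      rw [this]
      rw [hWH, hW0]
      ring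
    have hsplit : ∫ z in (0:ℝ)..H, (Wz z * (Vz z)^2 + Wb z * (2 * Vz z * Vzz z))
        = A + 2 * Cc := by
      rw [integral_add i1 ((cWb.fun_mul ((continuous_const.fun_mul cVz).fun_mul cVzz)).intervalIntegrable _ _)]
      congr 1
      rw [hCc, ← intervalIntegral.integral_const_mul]
      apply integral_congr
      intro z _
      ring
    rw [hsplit] at hp
    exact hp
  -- rewrite the main integral
  have hmain : ∫ z in (0:ℝ)..H, 2 * Vz z * Vzt z
      = 4 * A - 2 * B - 2 * Cc - (8 / H * I) * ∫ z in (0:ℝ)..H, Vz z := by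
    have hcongr : ∫ z in (0:ℝ)..H, 2 * Vz z * Vzt z
        = ∫ z in (0:ℝ)..H, (4 * (Wz z * (Vz z)^2) - 2 * (Wzz z * V z * Vz z)
            - 2 * (Wb z * (Vz z * Vzz z)) - (8 / H * I) * Vz z) := by
      apply integral_congr
      intro z hz
      rw [hUIcc] at hz
      simp only []
      rw [heq z hz]
      ring
    rw [hcongr]
    rw [integral_sub (((((continuous_const.fun_mul (cWz.fun_mul (cVz.fun_pow 2))).fun_sub
        (continuous_const.fun_mul ((cWzz.fun_mul cV).fun_mul cVz))).fun_sub
        (continuous_const.fun_mul (cWb.fun_mul (cVz.fun_mul cVzz)))).intervalIntegrable _ _))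
      ((continuous_const.fun_mul cVz).intervalIntegrable _ _),
      integral_sub (((continuous_const.fun_mul (cWz.fun_mul (cVz.fun_pow 2))).fun_sub
        (continuous_const.fun_mul ((cWzz.fun_mul cV).fun_mul cVz))).intervalIntegrable _ _)
      ((continuous_const.fun_mul (cWb.fun_mul (cVz.fun_mul cVzz))).intervalIntegrable _ _),
      integral_sub ((continuous_const.fun_mul (cWz.fun_mul (cVz.fun_pow 2))).intervalIntegrable _ _)
      ((continuous_const.fun_mul ((cWzz.fun_mul cV).fun_mul cVz)).intervalIntegrable _ _),
      intervalIntegral.integral_const_mul, intervalIntegral.integral_const_mul, intervalIntegral.integral_const_mul, intervalIntegral.integral_const_mul]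
  rw [hmain, hD]
  linarith

/-- the energy identity for the difference equation. If `V` satisfies
`V_{tz} − 2W̄_z V_z + V W̄_{zz} + W̄ V_{zz} + (4/H)∫₀ᴴ W̄_z V_z = 0` with
`V(0,t) = V(H,t) = 0` and `W̄(0,t) = W̄(H,t) = 0`, then
`(1/2) d/dt ∫₀ᴴ V_z² = (5/2)∫₀ᴴ W̄_z (V_z)² − ∫₀ᴴ W̄_{zz} V V_z`. -/
theorem energy_identity (H T : ℝ) (hH : 0 < H) (hT : 0 < T)
    (V Wb : ℝ → ℝ → ℝ)
    (hV : ContDiff ℝ (⊤ : ℕ∞) (Function.uncurry V))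
    (hWb : ContDiff ℝ (⊤ : ℕ∞) (Function.uncurry Wb))
    (hVbc : ∀ t ∈ Set.Ico (0:ℝ) T, V 0 t = 0 ∧ V H t = 0)
    (hWbc : ∀ t ∈ Set.Ico (0:ℝ) T, Wb 0 t = 0 ∧ Wb H t = 0)
    (heq : ∀ z ∈ Set.Icc (0:ℝ) H, ∀ t ∈ Set.Ico (0:ℝ) T,
      deriv (fun s => deriv (fun y => V y s) z) t
        - 2 * deriv (fun y => Wb y t) z * deriv (fun y => V y t) z
        + V z t * deriv (deriv (fun y => Wb y t)) z
        + Wb z t * deriv (deriv (fun y => V y t)) z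
        + (4 / H) * ∫ y in (0:ℝ)..H,
            deriv (fun y' => Wb y' t) y * deriv (fun y' => V y' t) y = 0) :
    ∀ t ∈ Set.Ico (0:ℝ) T,
      deriv (fun s => (1 / 2) * ∫ z in (0:ℝ)..H, (deriv (fun y => V y s) z) ^ 2) t
        = (5 / 2) * (∫ z in (0:ℝ)..H,
            deriv (fun y => Wb y t) z * (deriv (fun y => V y t) z) ^ 2)
          - ∫ z in (0:ℝ)..H,
              deriv (deriv (fun y => Wb y t)) z * V z t * deriv (fun y => V y t) z := by
  intro t ht
  obtain ⟨hV0, hVH⟩ := hVbc t ht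
  obtain ⟨hW0, hWH⟩ := hWbc t ht
  have hVz2 : ContDiff ℝ (⊤ : ℕ∞) (uncurry fun z s => deriv (fun y => V y s) z) := contDiff_pfst hV
  have hWz2 : ContDiff ℝ (⊤ : ℕ∞) (uncurry fun z s => deriv (fun y => Wb y s) z) := contDiff_pfst hWb
  have hVzz2 := contDiff_pfst hVz2
  have hWzz2 := contDiff_pfst hWz2
  have hVzt2 := contDiff_psnd hVz2
  -- step A : differentiate under the integral
  have hG : ContDiff ℝ (⊤ : ℕ∞) (uncurry fun z s => (deriv (fun y => V y s) z) ^ 2) := hVz2.pow 2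
  have hA := hasDerivAt_int hG 0 H t
  have hLHS : deriv (fun s => (1 / 2) * ∫ z in (0:ℝ)..H, (deriv (fun y => V y s) z) ^ 2) t
      = (1/2) * ∫ z in (0:ℝ)..H, deriv (fun s => (deriv (fun y => V y s) z) ^ 2) t :=
    (hA.const_mul (1/2 : ℝ)).deriv
  -- step B : pointwise derivative of the square
  have hsq : ∀ z : ℝ, deriv (fun s => (deriv (fun y => V y s) z) ^ 2) t
      = 2 * deriv (fun y => V y t) z * deriv (fun s => deriv (fun y => V y s) z) t := by
    intro z
    have h1 : HasDerivAt (fun s => deriv (fun y => V y s) z)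
        (deriv (fun s => deriv (fun y => V y s) z) t) t :=
      ((sect2 hVz2 z).differentiable (by simp) t).hasDerivAt
    rw [(h1.fun_pow 2).deriv]
    push_cast
    ring
  have hLHS2 : (∫ z in (0:ℝ)..H, deriv (fun s => (deriv (fun y => V y s) z) ^ 2) t)
      = ∫ z in (0:ℝ)..H,
          2 * deriv (fun y => V y t) z * deriv (fun s => deriv (fun y => V y s) z) t := by
    apply intervalIntegral.integral_congr
    intro z _
    exact hsq z
  rw [hLHS, hLHS2]
  -- apply the key lemma
  exact key H hH (fun z => V z t) (fun z => Wb z t)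
    (fun z => deriv (fun y => V y t) z)
    (fun z => deriv (deriv (fun y => V y t)) z)
    (fun z => deriv (fun s => deriv (fun y => V y s) z) t)
    (fun z => deriv (fun y => Wb y t) z)
    (fun z => deriv (deriv (fun y => Wb y t)) z)
    (fun z => ((sect1 hV t).differentiable (by simp) z).hasDerivAt)
    (fun z => ((sect1 hVz2 t).differentiable (by simp) z).hasDerivAt)
    (fun z => ((sect1 hWb t).differentiable (by simp) z).hasDerivAt)
    (sect1 hV t).continuous (sect1 hVz2 t).continuous (sect1 hVzz2 t).continuous
    (sect1 hWb t).continuous (sect1 hWz2 t).continuous (sect1 hWzz2 t).continuous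
    (sect1 hVzt2 t).continuous
    hV0 hVH hW0 hWH
    (fun z hz => by have := heq z hz t ht; linarith)
end

section
/- Let u, w, p be a smooth solution of the 2D inviscid primitive equations u_t + u u_x + w u_z + p_x = 0, p_z = 0, u_x + w_z = 0 on the channel ℝ × [0,H], L-periodic in x, with w = 0 at z = 0, H, and with the odd symmetry u(x,z,t) = −u(−x,z,t), w(x,z,t) = w(−x,z,t). Then W(z,t) := w(0,z,t) satisfies the closed one-dimensional equation W_{tz} − (W_z)² + W·W_{zz} + (2/H)∫₀ᴴ (W_z)² dz = 0 with W(0,t) = W(H,t) = 0. -/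
open Real Set


open scoped ContDiff

noncomputable def pd {E : Type*} [NormedAddCommGroup E] [NormedSpace ℝ E]
    (f : E → ℝ) (v : E) : E → ℝ := fun q => fderiv ℝ f q v

section helpers
variable {E F : Type*} [NormedAddCommGroup E] [NormedSpace ℝ E]
  [NormedAddCommGroup F] [NormedSpace ℝ F]

lemma ContDiff.diffAt {f : E → F} (hf : ContDiff ℝ ∞ f) {q : E} :
    DifferentiableAt ℝ f q := (hf.differentiable (by simp)).differentiableAt

lemma pd_contDiff {f : E → ℝ} (hf : ContDiff ℝ ∞ f) (v : E) :
    ContDiff ℝ ∞ (pd f v) :=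
  (hf.fderiv_right (by simp)).clm_apply contDiff_const

lemma pd_continuous {f : E → ℝ} (hf : ContDiff ℝ ∞ f) (v : E) :
    Continuous (pd f v) := (pd_contDiff hf v).continuous

lemma hasDerivAt_comp_line {f : E → ℝ} (hf : ContDiff ℝ ∞ f) {c : ℝ → E} {v : E} {x : ℝ}
    (hc : HasDerivAt c v x) : HasDerivAt (fun s => f (c s)) (pd f v (c x)) x :=
  hf.diffAt.hasFDerivAt.comp_hasDerivAt x hc

lemma deriv_comp_line {f : E → ℝ} (hf : ContDiff ℝ ∞ f) {c : ℝ → E} {v : E} {x : ℝ}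
    (hc : HasDerivAt c v x) : deriv (fun s => f (c s)) x = pd f v (c x) :=
  (hasDerivAt_comp_line hf hc).deriv

lemma pd_eq_snd_fderiv {f : E → ℝ} (hf : ContDiff ℝ ∞ f) (v u : E) (q : E) :
    pd (pd f v) u q = fderiv ℝ (fderiv ℝ f) q u v := by
  have hfd : ContDiff ℝ ∞ (fderiv ℝ f) := hf.fderiv_right (by simp)
  have h2 : HasFDerivAt (fderiv ℝ f) (fderiv ℝ (fderiv ℝ f) q) q := hfd.diffAt.hasFDerivAt
  have key : HasFDerivAt (fun y => fderiv ℝ f y v)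
      ((ContinuousLinearMap.apply ℝ ℝ v).comp (fderiv ℝ (fderiv ℝ f) q)) q :=
    (ContinuousLinearMap.apply ℝ ℝ v).hasFDerivAt.comp q h2
  show fderiv ℝ (fun y => fderiv ℝ f y v) q u = _
  rw [key.fderiv]
  rfl

lemma pd_comm {f : E → ℝ} (hf : ContDiff ℝ ∞ f) (v u : E) (q : E) :
    pd (pd f v) u q = pd (pd f u) v q := by
  rw [pd_eq_snd_fderiv hf v u q, pd_eq_snd_fderiv hf u v q]
  have hd : ∀ y, HasFDerivAt f (fderiv ℝ f y) y := fun y => hf.diffAt.hasFDerivAt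
  have hfd : ContDiff ℝ ∞ (fderiv ℝ f) := hf.fderiv_right (by simp)
  exact second_derivative_symmetric hd hfd.diffAt.hasFDerivAt u v

end helpers

section lines

lemma lineX (z t x : ℝ) : HasDerivAt (fun x' : ℝ => ((x', z, t) : ℝ × ℝ × ℝ)) (1, 0, 0) x :=
  HasDerivAt.prodMk (hasDerivAt_id x) (HasDerivAt.prodMk (hasDerivAt_const x z) (hasDerivAt_const x t))

lemma lineZ (x t z : ℝ) : HasDerivAt (fun z' : ℝ => ((x, z', t) : ℝ × ℝ × ℝ)) (0, 1, 0) z :=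
  HasDerivAt.prodMk (hasDerivAt_const z x) (HasDerivAt.prodMk (hasDerivAt_id z) (hasDerivAt_const z t))

lemma lineT (x z t : ℝ) : HasDerivAt (fun s : ℝ => ((x, z, s) : ℝ × ℝ × ℝ)) (0, 0, 1) t :=
  HasDerivAt.prodMk (hasDerivAt_const t x) (HasDerivAt.prodMk (hasDerivAt_const t z) (hasDerivAt_id t))

lemma lineP (t x : ℝ) : HasDerivAt (fun x' : ℝ => ((x', t) : ℝ × ℝ)) (1, 0) x :=
  HasDerivAt.prodMk (hasDerivAt_id x) (hasDerivAt_const x t)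

end lines

lemma reduction_aux (H T : ℝ) (hH : 0 < H) (hT : 0 < T)
    (U Wf : ℝ × ℝ × ℝ → ℝ) (P : ℝ × ℝ → ℝ)
    (hU : ContDiff ℝ ∞ U) (hW : ContDiff ℝ ∞ Wf) (hP : ContDiff ℝ ∞ P)
    (hmom : ∀ x : ℝ, ∀ z ∈ Set.Icc (0:ℝ) H, ∀ t ∈ Set.Ico (0:ℝ) T,
      pd U (0,0,1) (x,z,t) + U (x,z,t) * pd U (1,0,0) (x,z,t)
        + Wf (x,z,t) * pd U (0,1,0) (x,z,t) + pd P (1,0) (x,t) = 0)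
    (hdiv : ∀ x : ℝ, ∀ z ∈ Set.Icc (0:ℝ) H, ∀ t ∈ Set.Ico (0:ℝ) T,
      pd U (1,0,0) (x,z,t) + pd Wf (0,1,0) (x,z,t) = 0)
    (hbc : ∀ x : ℝ, ∀ t ∈ Set.Ico (0:ℝ) T, Wf (x,0,t) = 0 ∧ Wf (x,H,t) = 0)
    (hU0 : ∀ z t : ℝ, U (0,z,t) = 0)
    (hWx : ∀ z t : ℝ, pd Wf (1,0,0) (0,z,t) = 0) :
    ∀ z ∈ Set.Icc (0:ℝ) H, ∀ t ∈ Set.Ico (0:ℝ) T,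
      pd (pd Wf (0,1,0)) (0,0,1) (0,z,t) - (pd Wf (0,1,0) (0,z,t))^2
        + Wf (0,z,t) * pd (pd Wf (0,1,0)) (0,1,0) (0,z,t)
        + (2 / H) * ∫ y in (0:ℝ)..H, (pd Wf (0,1,0) (0,y,t))^2 = 0 := by
  intro z hz t ht
  -- Step C: derivatives of the divergence relation vanish up to the boundary
  have hC : ∀ v : ℝ × ℝ × ℝ, ∀ z' ∈ Set.Icc (0:ℝ) H, ∀ t' ∈ Set.Ico (0:ℝ) T,
      pd (pd U (1,0,0)) v (0,z',t') + pd (pd Wf (0,1,0)) v (0,z',t') = 0 := by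
    intro v z' hz' t' ht'
    have hgc : Continuous (fun q => pd (pd U (1,0,0)) v q + pd (pd Wf (0,1,0)) v q) :=
      (pd_continuous (pd_contDiff hU _) v).add (pd_continuous (pd_contDiff hW _) v)
    have hopen : IsOpen ((univ : Set ℝ) ×ˢ Ioo (0:ℝ) H ×ˢ Ioo (0:ℝ) T) :=
      isOpen_univ.prod (isOpen_Ioo.prod isOpen_Ioo)
    have hzero : EqOn (fun q => pd (pd U (1,0,0)) v q + pd (pd Wf (0,1,0)) v q) 0
        ((univ : Set ℝ) ×ˢ Ioo (0:ℝ) H ×ˢ Ioo (0:ℝ) T) := by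
      intro q hq
      have hev : (fun q' => pd U (1,0,0) q' + pd Wf (0,1,0) q') =ᶠ[nhds q] (fun _ => 0) := by
        filter_upwards [hopen.mem_nhds hq] with q' hq'
        obtain ⟨-, h2, h3⟩ := hq'
        exact hdiv q'.1 q'.2.1 (Ioo_subset_Icc_self h2) q'.2.2 (Ioo_subset_Ico_self h3)
      have h1 : fderiv ℝ (fun q' => pd U (1,0,0) q' + pd Wf (0,1,0) q') q = 0 := by
        rw [hev.fderiv_eq]; exact fderiv_const_apply 0
      have h2 : fderiv ℝ (fun q' => pd U (1,0,0) q' + pd Wf (0,1,0) q') q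
          = fderiv ℝ (pd U (1,0,0)) q + fderiv ℝ (pd Wf (0,1,0)) q :=
        fderiv_add (pd_contDiff hU _).diffAt (pd_contDiff hW _).diffAt
      have h3 : pd (pd U (1,0,0)) v q + pd (pd Wf (0,1,0)) v q
          = (fderiv ℝ (fun q' => pd U (1,0,0) q' + pd Wf (0,1,0) q') q) v := by
        rw [h2]; rfl
      show pd (pd U (1,0,0)) v q + pd (pd Wf (0,1,0)) v q = 0
      rw [h3, h1]; simp
    have hcl := hzero.closure hgc continuous_const
    have hmem : ((0:ℝ), z', t') ∈ closure ((univ : Set ℝ) ×ˢ Ioo (0:ℝ) H ×ˢ Ioo (0:ℝ) T) := by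
      rw [closure_prod_eq, closure_prod_eq, closure_univ, closure_Ioo hH.ne, closure_Ioo hT.ne]
      exact ⟨mem_univ _, hz', Ico_subset_Icc_self ht'⟩
    exact hcl hmem
  -- Step B: differentiate the momentum equation in x at x = 0
  have hB : ∀ z' ∈ Set.Icc (0:ℝ) H,
      pd (pd U (0,0,1)) (1,0,0) (0,z',t)
        + (pd U (1,0,0) (0,z',t) * pd U (1,0,0) (0,z',t) + U (0,z',t) * pd (pd U (1,0,0)) (1,0,0) (0,z',t))
        + (pd Wf (1,0,0) (0,z',t) * pd U (0,1,0) (0,z',t) + Wf (0,z',t) * pd (pd U (0,1,0)) (1,0,0) (0,z',t))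
        + pd (pd P (1,0)) (1,0) (0,t) = 0 := by
    intro z' hz'
    have hd : HasDerivAt (fun x => pd U (0,0,1) (x,z',t) + U (x,z',t) * pd U (1,0,0) (x,z',t)
        + Wf (x,z',t) * pd U (0,1,0) (x,z',t) + pd P (1,0) (x,t))
        (pd (pd U (0,0,1)) (1,0,0) (0,z',t)
          + (pd U (1,0,0) (0,z',t) * pd U (1,0,0) (0,z',t) + U (0,z',t) * pd (pd U (1,0,0)) (1,0,0) (0,z',t))
          + (pd Wf (1,0,0) (0,z',t) * pd U (0,1,0) (0,z',t) + Wf (0,z',t) * pd (pd U (0,1,0)) (1,0,0) (0,z',t))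
          + pd (pd P (1,0)) (1,0) (0,t)) 0 :=
      (((hasDerivAt_comp_line (pd_contDiff hU (0,0,1)) (lineX z' t 0)).add
        ((hasDerivAt_comp_line hU (lineX z' t 0)).mul
          (hasDerivAt_comp_line (pd_contDiff hU (1,0,0)) (lineX z' t 0)))).add
        ((hasDerivAt_comp_line hW (lineX z' t 0)).mul
          (hasDerivAt_comp_line (pd_contDiff hU (0,1,0)) (lineX z' t 0)))).add
        (hasDerivAt_comp_line (pd_contDiff hP (1,0)) (lineP t 0))
    have hΦ : (fun x => pd U (0,0,1) (x,z',t) + U (x,z',t) * pd U (1,0,0) (x,z',t)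
        + Wf (x,z',t) * pd U (0,1,0) (x,z',t) + pd P (1,0) (x,t)) = fun _ => (0:ℝ) :=
      funext fun x => hmom x z' hz' t ht
    have := hd.deriv
    rw [hΦ] at this
    simp only [deriv_const'] at this
    linarith [this]
  -- Step (*): pointwise identity in terms of Wf only
  have hstar : ∀ z' ∈ Set.Icc (0:ℝ) H,
      -pd (pd Wf (0,1,0)) (0,0,1) (0,z',t) + (pd Wf (0,1,0) (0,z',t))^2
        - Wf (0,z',t) * pd (pd Wf (0,1,0)) (0,1,0) (0,z',t)
        + pd (pd P (1,0)) (1,0) (0,t) = 0 := by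
    intro z' hz'
    have h1 := hB z' hz'
    rw [pd_comm hU (0,0,1) (1,0,0) (0,z',t), pd_comm hU (0,1,0) (1,0,0) (0,z',t)] at h1
    have c3 := hC (0,0,1) z' hz' t ht
    have c4 := hC (0,1,0) z' hz' t ht
    have c5 := hdiv 0 z' hz' t ht
    rw [hU0 z' t, hWx z' t] at h1
    have e3' : pd (pd U (1,0,0)) (0,0,1) (0,z',t) = -pd (pd Wf (0,1,0)) (0,0,1) (0,z',t) := by linarith
    have e2' : pd (pd U (1,0,0)) (0,1,0) (0,z',t) = -pd (pd Wf (0,1,0)) (0,1,0) (0,z',t) := by linarith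
    have e1' : pd U (1,0,0) (0,z',t) = -pd Wf (0,1,0) (0,z',t) := by linarith
    rw [e3', e2', e1'] at h1
    linear_combination h1
  -- boundary values of W_t vanish
  have keybt : ∀ c : ℝ, (∀ t' ∈ Set.Ico (0:ℝ) T, Wf (0,c,t') = 0) → pd Wf (0,0,1) (0,c,t) = 0 := by
    intro c hc
    have hcont : Continuous (fun s : ℝ => pd Wf (0,0,1) (0,c,s)) :=
      (pd_continuous hW _).comp (by fun_prop)
    have hzero : EqOn (fun s : ℝ => pd Wf (0,0,1) (0,c,s)) 0 (Ioo (0:ℝ) T) := by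
      intro s hs
      have hev : (fun r => Wf (0,c,r)) =ᶠ[nhds s] (fun _ => (0:ℝ)) := by
        filter_upwards [isOpen_Ioo.mem_nhds hs] with r hr
        exact hc r (Ioo_subset_Ico_self hr)
      have hder : pd Wf (0,0,1) (0,c,s) = deriv (fun r => Wf (0,c,r)) s :=
        (deriv_comp_line hW (lineT 0 c s)).symm
      show pd Wf (0,0,1) (0,c,s) = 0
      rw [hder, hev.deriv_eq]; simp
    have hcl := hzero.closure hcont continuous_const
    have hmem : t ∈ closure (Ioo (0:ℝ) T) := by
      rw [closure_Ioo hT.ne]; exact Ico_subset_Icc_self ht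
    exact hcl hmem
  have bt0 : pd Wf (0,0,1) (0,0,t) = 0 := keybt 0 (fun t' ht' => (hbc 0 t' ht').1)
  have btH : pd Wf (0,0,1) (0,H,t) = 0 := keybt H (fun t' ht' => (hbc 0 t' ht').2)
  -- continuity of slices
  have contWz : Continuous (fun y : ℝ => pd Wf (0,1,0) (0,y,t)) :=
    (pd_continuous hW _).comp (by fun_prop)
  have contW : Continuous (fun y : ℝ => Wf (0,y,t)) := hW.continuous.comp (by fun_prop)
  have contWzz : Continuous (fun y : ℝ => pd (pd Wf (0,1,0)) (0,1,0) (0,y,t)) :=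
    (pd_continuous (pd_contDiff hW _) _).comp (by fun_prop)
  have contWzt : Continuous (fun y : ℝ => pd (pd Wf (0,1,0)) (0,0,1) (0,y,t)) :=
    (pd_continuous (pd_contDiff hW _) _).comp (by fun_prop)
  -- ∫ W_tz = 0
  have hD : (∫ y in (0:ℝ)..H, pd (pd Wf (0,1,0)) (0,0,1) (0,y,t)) = 0 := by
    have hswap : ∀ y : ℝ, pd (pd Wf (0,1,0)) (0,0,1) (0,y,t)
        = pd (pd Wf (0,0,1)) (0,1,0) (0,y,t) := fun y => pd_comm hW _ _ _
    rw [intervalIntegral.integral_congr (g := fun y => pd (pd Wf (0,0,1)) (0,1,0) (0,y,t))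
      (fun y _ => hswap y)]
    rw [intervalIntegral.integral_eq_sub_of_hasDerivAt
      (f := fun y => pd Wf (0,0,1) (0,y,t))
      (fun y _ => hasDerivAt_comp_line (pd_contDiff hW (0,0,1)) (lineZ 0 t y))
      (((pd_continuous (pd_contDiff hW _) _).comp (by fun_prop)).intervalIntegrable 0 H)]
    rw [bt0, btH]; ring
  -- integration by parts
  have hE : (∫ y in (0:ℝ)..H, (pd Wf (0,1,0) (0,y,t) * pd Wf (0,1,0) (0,y,t)
      + Wf (0,y,t) * pd (pd Wf (0,1,0)) (0,1,0) (0,y,t))) = 0 := by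
    rw [intervalIntegral.integral_eq_sub_of_hasDerivAt
      (f := fun y => Wf (0,y,t) * pd Wf (0,1,0) (0,y,t))
      (fun y _ => (hasDerivAt_comp_line hW (lineZ 0 t y)).mul
        (hasDerivAt_comp_line (pd_contDiff hW (0,1,0)) (lineZ 0 t y)))
      (((contWz.mul contWz).add (contW.mul contWzz)).intervalIntegrable 0 H)]
    rw [(hbc 0 t ht).1, (hbc 0 t ht).2]; ring
  -- integrate the pointwise identity
  set Pxx := pd (pd P (1,0)) (1,0) (0,t) with hPxxdef
  have hIzero : (∫ y in (0:ℝ)..H, (-pd (pd Wf (0,1,0)) (0,0,1) (0,y,t)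
      + (pd Wf (0,1,0) (0,y,t))^2
      - Wf (0,y,t) * pd (pd Wf (0,1,0)) (0,1,0) (0,y,t) + Pxx)) = 0 := by
    rw [intervalIntegral.integral_congr (g := fun _ => (0:ℝ)) ?_]
    · simp
    · intro y hy
      rw [uIcc_of_le hH.le] at hy
      exact hstar y hy
  have intA : IntervalIntegrable (fun y : ℝ => -pd (pd Wf (0,1,0)) (0,0,1) (0,y,t))
      MeasureTheory.volume 0 H := contWzt.neg.intervalIntegrable 0 H
  have intB : IntervalIntegrable (fun y : ℝ => (pd Wf (0,1,0) (0,y,t))^2)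
      MeasureTheory.volume 0 H := (contWz.pow 2).intervalIntegrable 0 H
  have intC : IntervalIntegrable (fun y : ℝ => Wf (0,y,t) * pd (pd Wf (0,1,0)) (0,1,0) (0,y,t))
      MeasureTheory.volume 0 H := (contW.mul contWzz).intervalIntegrable 0 H
  have intB' : IntervalIntegrable (fun y : ℝ => pd Wf (0,1,0) (0,y,t) * pd Wf (0,1,0) (0,y,t))
      MeasureTheory.volume 0 H := (contWz.mul contWz).intervalIntegrable 0 H
  rw [intervalIntegral.integral_add ((intA.add intB).sub intC) intervalIntegrable_const,
    intervalIntegral.integral_sub (intA.add intB) intC,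
    intervalIntegral.integral_add intA intB,
    intervalIntegral.integral_neg, hD, intervalIntegral.integral_const,
    smul_eq_mul] at hIzero
  rw [intervalIntegral.integral_add intB' intC] at hE
  have hBB : (∫ y in (0:ℝ)..H, pd Wf (0,1,0) (0,y,t) * pd Wf (0,1,0) (0,y,t))
      = ∫ y in (0:ℝ)..H, (pd Wf (0,1,0) (0,y,t))^2 :=
    intervalIntegral.integral_congr (fun y _ => (pow_two _).symm)
  rw [hBB] at hE
  set J := ∫ y in (0:ℝ)..H, (pd Wf (0,1,0) (0,y,t))^2 with hJdef
  have h2J : 2*J + H*Pxx = 0 := by linarith [hIzero, hE]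
  have hs := hstar z hz
  have hfinal : Pxx + (2/H) * J = 0 := by
    have h1 : Pxx = (-2 * J)/H := by
      field_simp
      linarith [h2J]
    rw [h1]; field_simp; ring
  linarith [hs, hfinal]

/-- for a smooth solution of the 2D inviscid primitive equations in
the periodic channel with odd symmetry in `x`, the trace `W(z,t) := w(0,z,t)`
satisfies the closed one-dimensional equation
`W_{tz} − (W_z)² + W W_{zz} + (2/H)∫₀ᴴ(W_z)² dz = 0` with `W(0,t) = W(H,t) = 0`. -/
theorem reduction_to_one_dimension (H L T : ℝ) (hH : 0 < H) (hL : 0 < L) (hT : 0 < T)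
    (u w : ℝ → ℝ → ℝ → ℝ) (p : ℝ → ℝ → ℝ)
    (hu : ContDiff ℝ (⊤ : ℕ∞) (fun q : ℝ × ℝ × ℝ => u q.1 q.2.1 q.2.2))
    (hw : ContDiff ℝ (⊤ : ℕ∞) (fun q : ℝ × ℝ × ℝ => w q.1 q.2.1 q.2.2))
    (hp : ContDiff ℝ (⊤ : ℕ∞) (Function.uncurry p))
    (hper : ∀ x z t, u (x + L) z t = u x z t ∧ w (x + L) z t = w x z t ∧
      p (x + L) t = p x t)
    (hmom : ∀ x, ∀ z ∈ Set.Icc (0:ℝ) H, ∀ t ∈ Set.Ico (0:ℝ) T,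
      deriv (fun s => u x z s) t
        + u x z t * deriv (fun x' => u x' z t) x
        + w x z t * deriv (fun z' => u x z' t) z
        + deriv (fun x' => p x' t) x = 0)
    (hdiv : ∀ x, ∀ z ∈ Set.Icc (0:ℝ) H, ∀ t ∈ Set.Ico (0:ℝ) T,
      deriv (fun x' => u x' z t) x + deriv (fun z' => w x z' t) z = 0)
    (hbc : ∀ x, ∀ t ∈ Set.Ico (0:ℝ) T, w x 0 t = 0 ∧ w x H t = 0)
    (hsymm : ∀ x z t, u x z t = -u (-x) z t ∧ w x z t = w (-x) z t) :
    let W : ℝ → ℝ → ℝ := fun z t => w 0 z t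
    (∀ z ∈ Set.Icc (0:ℝ) H, ∀ t ∈ Set.Ico (0:ℝ) T,
      deriv (fun s => deriv (fun y => W y s) z) t
        - (deriv (fun y => W y t) z) ^ 2
        + W z t * deriv (deriv (fun y => W y t)) z
        + (2 / H) * ∫ y in (0:ℝ)..H, (deriv (fun y' => W y' t) y) ^ 2 = 0) ∧
    (∀ t ∈ Set.Ico (0:ℝ) T, W 0 t = 0 ∧ W H t = 0) := by
  intro W
  have hu' : ContDiff ℝ ∞ (fun q : ℝ × ℝ × ℝ => u q.1 q.2.1 q.2.2) := hu.of_le (by simp)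
  have hw' : ContDiff ℝ ∞ (fun q : ℝ × ℝ × ℝ => w q.1 q.2.1 q.2.2) := hw.of_le (by simp)
  have hp' : ContDiff ℝ ∞ (Function.uncurry p) := hp.of_le (by simp)
  -- conversions between curried `deriv`s and `pd`s
  have cUt : ∀ x z t : ℝ, deriv (fun s => u x z s) t
      = pd (fun q : ℝ × ℝ × ℝ => u q.1 q.2.1 q.2.2) (0,0,1) (x,z,t) :=
    fun x z t => deriv_comp_line hu' (lineT x z t)
  have cUx : ∀ x z t : ℝ, deriv (fun x' => u x' z t) x
      = pd (fun q : ℝ × ℝ × ℝ => u q.1 q.2.1 q.2.2) (1,0,0) (x,z,t) :=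
    fun x z t => deriv_comp_line hu' (lineX z t x)
  have cUz : ∀ x z t : ℝ, deriv (fun z' => u x z' t) z
      = pd (fun q : ℝ × ℝ × ℝ => u q.1 q.2.1 q.2.2) (0,1,0) (x,z,t) :=
    fun x z t => deriv_comp_line hu' (lineZ x t z)
  have cWz : ∀ x z t : ℝ, deriv (fun z' => w x z' t) z
      = pd (fun q : ℝ × ℝ × ℝ => w q.1 q.2.1 q.2.2) (0,1,0) (x,z,t) :=
    fun x z t => deriv_comp_line hw' (lineZ x t z)
  have cPx : ∀ x t : ℝ, deriv (fun x' => p x' t) x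
      = pd (Function.uncurry p) (1,0) (x,t) :=
    fun x t => deriv_comp_line hp' (lineP t x)
  -- hypotheses of the auxiliary lemma
  have hmom' : ∀ x : ℝ, ∀ z ∈ Set.Icc (0:ℝ) H, ∀ t ∈ Set.Ico (0:ℝ) T,
      pd (fun q : ℝ × ℝ × ℝ => u q.1 q.2.1 q.2.2) (0,0,1) (x,z,t)
        + u x z t * pd (fun q : ℝ × ℝ × ℝ => u q.1 q.2.1 q.2.2) (1,0,0) (x,z,t)
        + w x z t * pd (fun q : ℝ × ℝ × ℝ => u q.1 q.2.1 q.2.2) (0,1,0) (x,z,t)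
        + pd (Function.uncurry p) (1,0) (x,t) = 0 := by
    intro x z hz t ht
    have h := hmom x z hz t ht
    rw [cUt x z t, cUx x z t, cUz x z t, cPx x t] at h
    exact h
  have hdiv' : ∀ x : ℝ, ∀ z ∈ Set.Icc (0:ℝ) H, ∀ t ∈ Set.Ico (0:ℝ) T,
      pd (fun q : ℝ × ℝ × ℝ => u q.1 q.2.1 q.2.2) (1,0,0) (x,z,t)
        + pd (fun q : ℝ × ℝ × ℝ => w q.1 q.2.1 q.2.2) (0,1,0) (x,z,t) = 0 := by
    intro x z hz t ht
    have h := hdiv x z hz t ht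
    rw [cUx x z t, cWz x z t] at h
    exact h
  have hU0 : ∀ z t : ℝ, u 0 z t = 0 := by
    intro z t
    have h := (hsymm 0 z t).1
    rw [neg_zero] at h
    linarith
  have hWx : ∀ z t : ℝ, pd (fun q : ℝ × ℝ × ℝ => w q.1 q.2.1 q.2.2) (1,0,0) (0,z,t) = 0 := by
    intro z t
    have lineNeg : HasDerivAt (fun x : ℝ => ((-x, z, t) : ℝ × ℝ × ℝ)) (-1,0,0) 0 :=
      HasDerivAt.prodMk ((hasDerivAt_id (0:ℝ)).neg) (HasDerivAt.prodMk (hasDerivAt_const _ z) (hasDerivAt_const _ t))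
    have h1 : deriv (fun x => w x z t) 0
        = pd (fun q : ℝ × ℝ × ℝ => w q.1 q.2.1 q.2.2) (1,0,0) (0,z,t) :=
      deriv_comp_line hw' (lineX z t 0)
    have h2 : deriv (fun x => w (-x) z t) 0
        = pd (fun q : ℝ × ℝ × ℝ => w q.1 q.2.1 q.2.2) (-1,0,0) (-0,z,t) :=
      deriv_comp_line hw' lineNeg
    simp only [neg_zero] at h2
    have h3 : (fun x => w x z t) = fun x => w (-x) z t := funext fun x => (hsymm x z t).2
    have h4 : pd (fun q : ℝ × ℝ × ℝ => w q.1 q.2.1 q.2.2) (-1,0,0) ((0:ℝ),z,t)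
        = -pd (fun q : ℝ × ℝ × ℝ => w q.1 q.2.1 q.2.2) (1,0,0) ((0:ℝ),z,t) := by
      show fderiv ℝ (fun q : ℝ × ℝ × ℝ => w q.1 q.2.1 q.2.2) (0,z,t) (-1,0,0)
        = -fderiv ℝ (fun q : ℝ × ℝ × ℝ => w q.1 q.2.1 q.2.2) (0,z,t) (1,0,0)
      have hv : ((-1 : ℝ),(0:ℝ),(0:ℝ)) = -((1:ℝ),(0:ℝ),(0:ℝ)) := by
        simp [Prod.ext_iff]
      rw [hv, map_neg]
    rw [h3, h2, h4] at h1
    linarith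
  have main := reduction_aux H T hH hT
    (fun q : ℝ × ℝ × ℝ => u q.1 q.2.1 q.2.2)
    (fun q : ℝ × ℝ × ℝ => w q.1 q.2.1 q.2.2)
    (Function.uncurry p) hu' hw' hp' hmom' hdiv' hbc hU0 hWx
  constructor
  · intro z hz t ht
    have g1 : ∀ z' s : ℝ, deriv (fun y => W y s) z'
        = pd (fun q : ℝ × ℝ × ℝ => w q.1 q.2.1 q.2.2) (0,1,0) (0,z',s) :=
      fun z' s => deriv_comp_line hw' (lineZ 0 s z')
    have g2 : deriv (fun s => deriv (fun y => W y s) z) t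
        = pd (pd (fun q : ℝ × ℝ × ℝ => w q.1 q.2.1 q.2.2) (0,1,0)) (0,0,1) (0,z,t) := by
      have h : (fun s => deriv (fun y => W y s) z)
          = fun s => pd (fun q : ℝ × ℝ × ℝ => w q.1 q.2.1 q.2.2) (0,1,0) (0,z,s) :=
        funext fun s => g1 z s
      rw [h]
      exact deriv_comp_line (pd_contDiff hw' (0,1,0)) (lineT 0 z t)
    have g3 : deriv (deriv (fun y => W y t)) z
        = pd (pd (fun q : ℝ × ℝ × ℝ => w q.1 q.2.1 q.2.2) (0,1,0)) (0,1,0) (0,z,t) := by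
      have h : deriv (fun y => W y t)
          = fun y => pd (fun q : ℝ × ℝ × ℝ => w q.1 q.2.1 q.2.2) (0,1,0) (0,y,t) :=
        funext fun y => g1 y t
      rw [h]
      exact deriv_comp_line (pd_contDiff hw' (0,1,0)) (lineZ 0 t z)
    rw [g2, g3]
    simp only [g1]
    exact main z hz t ht
  · exact fun t ht => hbc 0 t ht
end

section
/- Suppose (u,w,p) is a smooth solution on ℝ × [0,H] × [0,1] of the 2D inviscid primitive equations u_t + u u_x + w u_z + p_x = 0, p_z = 0, u_x + w_z = 0, L-periodic in x, with w = 0 at z = 0, H, odd symmetry in x, and initial data u₀(x,z) = −(L/(2πk))sin(2πkx/L)φ'(z), w₀(x,z) = cos(2πkx/L)φ(z) where φ is a nontrivial solution of the nonlocal ODE boundary value problem. Assume the uniqueness result for the reduced equation holds. Then w(0,z,t) = φ(z)/(1−t) for all t ∈ [0,1), and hence no such smooth solution exists on [0,1]: the solution blows up by time t = 1. -/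
open Real Set

open MeasureTheory

section Aux
variable {E : Type*} [NormedAddCommGroup E] [NormedSpace ℝ E]

lemma aux_hasDerivAt_comp {Φ : E → ℝ} (hΦ : ContDiff ℝ (⊤ : ℕ∞) Φ) {γ : ℝ → E} {e : E} {x : ℝ}
    (hγ : HasDerivAt γ e x) :
    HasDerivAt (fun s => Φ (γ s)) (fderiv ℝ Φ (γ x) e) x :=
  ((hΦ.differentiable (by simp) (γ x)).hasFDerivAt).comp_hasDerivAt x hγ

lemma aux_hasDerivAt_fderiv_comp {Φ : E → ℝ} (hΦ : ContDiff ℝ (⊤ : ℕ∞) Φ) {γ : ℝ → E} {e : E} {x : ℝ}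
    (hγ : HasDerivAt γ e x) (v : E) :
    HasDerivAt (fun s => fderiv ℝ Φ (γ s) v) (fderiv ℝ (fderiv ℝ Φ) (γ x) e v) x := by
  have h1 : ContDiff ℝ (⊤ : ℕ∞) (fderiv ℝ Φ) := hΦ.fderiv_right (by simp)
  have h2 := ((h1.differentiable (by simp) (γ x)).hasFDerivAt).comp_hasDerivAt x hγ
  simpa using h2.clm_apply (hasDerivAt_const x v)

lemma aux_symm {Φ : E → ℝ} (hΦ : ContDiff ℝ (⊤ : ℕ∞) Φ) (p a b : E) :
    fderiv ℝ (fderiv ℝ Φ) p a b = fderiv ℝ (fderiv ℝ Φ) p b a :=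
  second_derivative_symmetric (fun y => (hΦ.differentiable (by simp) y).hasFDerivAt)
    (((hΦ.fderiv_right (m := (⊤ : ℕ∞)) (by simp)).differentiable (by simp) p).hasFDerivAt) a b

lemma aux_cont1 {Φ : E → ℝ} (hΦ : ContDiff ℝ (⊤ : ℕ∞) Φ) (v : E) :
    Continuous (fun q => fderiv ℝ Φ q v) :=
  (ContinuousLinearMap.apply ℝ ℝ v).continuous.comp
    ((hΦ.fderiv_right (m := (⊤ : ℕ∞)) (by simp)).continuous)

lemma aux_cont2 {Φ : E → ℝ} (hΦ : ContDiff ℝ (⊤ : ℕ∞) Φ) (a b : E) :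
    Continuous (fun q => fderiv ℝ (fderiv ℝ Φ) q a b) :=
  (ContinuousLinearMap.apply ℝ ℝ b).continuous.comp <|
    (ContinuousLinearMap.apply ℝ (E →L[ℝ] ℝ) a).continuous.comp
      (((hΦ.fderiv_right (m := (⊤ : ℕ∞)) (by simp)).fderiv_right (m := (⊤ : ℕ∞)) (by simp)).continuous)

lemma aux_deriv_even_zero {g : ℝ → ℝ} (hg : ∀ x, g x = g (-x)) : deriv g 0 = 0 := by
  have h1 : deriv (fun x => g (-x)) 0 = -deriv g (-0) := deriv_comp_neg g 0
  have h2 : (fun x => g (-x)) = g := by funext x; exact (hg x).symm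
  rw [h2] at h1
  simp only [neg_zero] at h1
  linarith

lemma curve1 (z t x : ℝ) :
    HasDerivAt (fun x' : ℝ => ((x' : ℝ), z, t)) (((1:ℝ), (0:ℝ), (0:ℝ))) x :=
  (hasDerivAt_id x).prodMk ((hasDerivAt_const x z).prodMk (hasDerivAt_const x t))

lemma curve2 (x t z : ℝ) :
    HasDerivAt (fun z' : ℝ => (x, (z' : ℝ), t)) (((0:ℝ), (1:ℝ), (0:ℝ))) z :=
  (hasDerivAt_const z x).prodMk ((hasDerivAt_id z).prodMk (hasDerivAt_const z t))

lemma curve3 (x z t : ℝ) :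
    HasDerivAt (fun s : ℝ => (x, z, (s : ℝ))) (((0:ℝ), (0:ℝ), (1:ℝ))) t :=
  (hasDerivAt_const t x).prodMk ((hasDerivAt_const t z).prodMk (hasDerivAt_id t))

lemma curveP (t x : ℝ) :
    HasDerivAt (fun x' : ℝ => ((x' : ℝ), t)) (((1:ℝ), (0:ℝ))) x :=
  (hasDerivAt_id x).prodMk (hasDerivAt_const x t)

end Aux

set_option maxHeartbeats 2000000

/-- the main blowup theorem. Suppose `(u,w,p)` is a smooth solution
of the 2D inviscid primitive equations on `ℝ × [0,H] × [0,1]`, `L`-periodic in `x`,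
with no-normal-flow boundary conditions, odd symmetry in `x`, and initial data
`u₀(x,z) = −(L/(2πk)) sin(2πkx/L) φ'(z)`, `w₀(x,z) = cos(2πkx/L) φ(z)`, where `φ`
is a nontrivial solution of the nonlocal ODE boundary value problem. Assuming
the uniqueness result for the reduced equation, `w(0,z,t) = φ(z)/(1−t)` on
`[0,1)`; hence no such smooth solution exists on `[0,1]`. -/
theorem blowup_of_primitive_equations (H L : ℝ) (k : ℕ)
    (hH : 0 < H) (hL : 0 < L) (hk : 0 < k) (φ : ℝ → ℝ)
    (hφreg : ContDiffOn ℝ 2 φ (Set.Icc 0 H))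
    (hφode : ∀ z ∈ Set.Icc (0:ℝ) H,
      deriv φ z - (deriv φ z) ^ 2 + φ z * deriv (deriv φ) z
        + (2 / H) * ∫ y in (0:ℝ)..H, (deriv φ y) ^ 2 = 0)
    (hφbc0 : φ 0 = 0) (hφbcH : φ H = 0)
    (hφnt : ∃ z ∈ Set.Icc (0:ℝ) H, φ z ≠ 0)
    (u w : ℝ → ℝ → ℝ → ℝ) (p : ℝ → ℝ → ℝ)
    (hu : ContDiff ℝ (⊤ : ℕ∞) (fun q : ℝ × ℝ × ℝ => u q.1 q.2.1 q.2.2))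
    (hw : ContDiff ℝ (⊤ : ℕ∞) (fun q : ℝ × ℝ × ℝ => w q.1 q.2.1 q.2.2))
    (hp : ContDiff ℝ (⊤ : ℕ∞) (Function.uncurry p))
    (hper : ∀ x z t, u (x + L) z t = u x z t ∧ w (x + L) z t = w x z t ∧
      p (x + L) t = p x t)
    (hmom : ∀ x, ∀ z ∈ Set.Icc (0:ℝ) H, ∀ t ∈ Set.Icc (0:ℝ) 1,
      deriv (fun s => u x z s) t
        + u x z t * deriv (fun x' => u x' z t) x
        + w x z t * deriv (fun z' => u x z' t) z
        + deriv (fun x' => p x' t) x = 0)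
    (hdiv : ∀ x, ∀ z ∈ Set.Icc (0:ℝ) H, ∀ t ∈ Set.Icc (0:ℝ) 1,
      deriv (fun x' => u x' z t) x + deriv (fun z' => w x z' t) z = 0)
    (hbc : ∀ x, ∀ t ∈ Set.Icc (0:ℝ) 1, w x 0 t = 0 ∧ w x H t = 0)
    (hsymm : ∀ x z t, u x z t = -u (-x) z t ∧ w x z t = w (-x) z t ∧
      p x t = p (-x) t)
    (hinit : ∀ x z,
      u x z 0 = -(L / (2 * Real.pi * k)) * Real.sin (2 * Real.pi * k * x / L)
          * deriv φ z ∧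
      w x z 0 = Real.cos (2 * Real.pi * k * x / L) * φ z)
    -- the uniqueness result for the reduced equation (Proposition 4.1)
    (huniq : ∀ W₁ W₂ : ℝ → ℝ → ℝ,
      ContDiffOn ℝ 2 (Function.uncurry W₁) (Set.Icc 0 H ×ˢ Set.Ico 0 1) →
      ContDiffOn ℝ 2 (Function.uncurry W₂) (Set.Icc 0 H ×ˢ Set.Ico 0 1) →
      (∀ z ∈ Set.Icc (0:ℝ) H, ∀ t ∈ Set.Ico (0:ℝ) 1,
        deriv (fun s => deriv (fun y => W₁ y s) z) t
          - (deriv (fun y => W₁ y t) z) ^ 2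
          + W₁ z t * deriv (deriv (fun y => W₁ y t)) z
          + (2 / H) * ∫ y in (0:ℝ)..H, (deriv (fun y' => W₁ y' t) y) ^ 2 = 0) →
      (∀ z ∈ Set.Icc (0:ℝ) H, ∀ t ∈ Set.Ico (0:ℝ) 1,
        deriv (fun s => deriv (fun y => W₂ y s) z) t
          - (deriv (fun y => W₂ y t) z) ^ 2
          + W₂ z t * deriv (deriv (fun y => W₂ y t)) z
          + (2 / H) * ∫ y in (0:ℝ)..H, (deriv (fun y' => W₂ y' t) y) ^ 2 = 0) →
      (∀ t ∈ Set.Ico (0:ℝ) 1, W₁ 0 t = 0 ∧ W₁ H t = 0) →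
      (∀ t ∈ Set.Ico (0:ℝ) 1, W₂ 0 t = 0 ∧ W₂ H t = 0) →
      (∀ z ∈ Set.Icc (0:ℝ) H, W₁ z 0 = W₂ z 0) →
      ∀ z ∈ Set.Icc (0:ℝ) H, ∀ t ∈ Set.Ico (0:ℝ) 1, W₁ z t = W₂ z t) :
    (∀ z ∈ Set.Icc (0:ℝ) H, ∀ t ∈ Set.Ico (0:ℝ) 1,
      w 0 z t = φ z / (1 - t)) ∧ False := by
  classical
  set u3 : ℝ × ℝ × ℝ → ℝ := fun q => u q.1 q.2.1 q.2.2 with hu3def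
  set w3 : ℝ × ℝ × ℝ → ℝ := fun q => w q.1 q.2.1 q.2.2 with hw3def
  set p2 : ℝ × ℝ → ℝ := Function.uncurry p with hp2def
  -- continuous embeddings
  have hcy : ∀ t : ℝ, Continuous (fun y : ℝ => ((0:ℝ), y, t)) := fun t =>
    continuous_const.prodMk (continuous_id.prodMk continuous_const)
  have hcq : Continuous (fun q : ℝ × ℝ => ((0:ℝ), q.1, q.2)) :=
    continuous_const.prodMk (continuous_fst.prodMk continuous_snd)
  -- u vanishes at x = 0
  have huzero : ∀ z t : ℝ, u 0 z t = 0 := by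
    intro z t
    have h := (hsymm 0 z t).1
    rw [neg_zero] at h
    linarith
  -- ∂_z u = 0 at x = 0
  have hWz0 : ∀ z t : ℝ, fderiv ℝ u3 (0, z, t) (0, 1, 0) = 0 := by
    intro z t
    have h : deriv (fun z' : ℝ => u 0 z' t) z = fderiv ℝ u3 (0, z, t) (0, 1, 0) :=
      (aux_hasDerivAt_comp hu (curve2 0 t z)).deriv
    rw [← h, show (fun z' : ℝ => u 0 z' t) = fun _ => (0:ℝ) from
      funext fun z' => huzero z' t, deriv_const]
  -- ∂_x w = 0 at x = 0 (w even)
  have hweven : ∀ z t : ℝ, fderiv ℝ w3 (0, z, t) (1, 0, 0) = 0 := by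
    intro z t
    have h : deriv (fun x : ℝ => w x z t) 0 = fderiv ℝ w3 (0, z, t) (1, 0, 0) :=
      (aux_hasDerivAt_comp hw (curve1 z t 0)).deriv
    rw [← h]
    exact aux_deriv_even_zero (fun x => (hsymm x z t).2.1)
  -- divergence free in fderiv form
  have hdivF : ∀ x z t : ℝ, z ∈ Icc (0:ℝ) H → t ∈ Icc (0:ℝ) 1 →
      fderiv ℝ u3 (x, z, t) (1, 0, 0) = - fderiv ℝ w3 (x, z, t) (0, 1, 0) := by
    intro x z t hz ht
    have h1 : deriv (fun x' => u x' z t) x = fderiv ℝ u3 (x, z, t) (1, 0, 0) :=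
      (aux_hasDerivAt_comp hu (curve1 z t x)).deriv
    have h2 : deriv (fun z' => w x z' t) z = fderiv ℝ w3 (x, z, t) (0, 1, 0) :=
      (aux_hasDerivAt_comp hw (curve2 x t z)).deriv
    have h3 := hdiv x z hz t ht
    rw [h1, h2] at h3
    linarith
  -- differentiated momentum equation at x = 0
  have hstar : ∀ z ∈ Icc (0:ℝ) H, ∀ t ∈ Icc (0:ℝ) 1,
      fderiv ℝ (fderiv ℝ u3) (0, z, t) (1, 0, 0) (0, 0, 1)
        + (fderiv ℝ u3 (0, z, t) (1, 0, 0)) ^ 2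
        + w 0 z t * fderiv ℝ (fderiv ℝ u3) (0, z, t) (1, 0, 0) (0, 1, 0)
        + fderiv ℝ (fderiv ℝ p2) (0, t) (1, 0) (1, 0) = 0 := by
    intro z hz t ht
    have h1 : HasDerivAt (fun x : ℝ => fderiv ℝ u3 (x, z, t) (0, 0, 1))
        (fderiv ℝ (fderiv ℝ u3) (0, z, t) (1, 0, 0) (0, 0, 1)) 0 :=
      aux_hasDerivAt_fderiv_comp hu (curve1 z t 0) _
    have h2a : HasDerivAt (fun x : ℝ => u x z t) (fderiv ℝ u3 (0, z, t) (1, 0, 0)) 0 :=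
      aux_hasDerivAt_comp hu (curve1 z t 0)
    have h2b : HasDerivAt (fun x : ℝ => fderiv ℝ u3 (x, z, t) (1, 0, 0))
        (fderiv ℝ (fderiv ℝ u3) (0, z, t) (1, 0, 0) (1, 0, 0)) 0 :=
      aux_hasDerivAt_fderiv_comp hu (curve1 z t 0) _
    have h3a : HasDerivAt (fun x : ℝ => w x z t) (fderiv ℝ w3 (0, z, t) (1, 0, 0)) 0 :=
      aux_hasDerivAt_comp hw (curve1 z t 0)
    have h3b : HasDerivAt (fun x : ℝ => fderiv ℝ u3 (x, z, t) (0, 1, 0))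
        (fderiv ℝ (fderiv ℝ u3) (0, z, t) (1, 0, 0) (0, 1, 0)) 0 :=
      aux_hasDerivAt_fderiv_comp hu (curve1 z t 0) _
    have h4 : HasDerivAt (fun x : ℝ => fderiv ℝ p2 (x, t) (1, 0))
        (fderiv ℝ (fderiv ℝ p2) (0, t) (1, 0) (1, 0)) 0 :=
      aux_hasDerivAt_fderiv_comp hp (curveP t 0) _
    have hM : HasDerivAt (fun x : ℝ => fderiv ℝ u3 (x, z, t) (0, 0, 1)
        + u x z t * fderiv ℝ u3 (x, z, t) (1, 0, 0)
        + w x z t * fderiv ℝ u3 (x, z, t) (0, 1, 0)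
        + fderiv ℝ p2 (x, t) (1, 0))
        (fderiv ℝ (fderiv ℝ u3) (0, z, t) (1, 0, 0) (0, 0, 1)
          + (fderiv ℝ u3 (0, z, t) (1, 0, 0) * fderiv ℝ u3 (0, z, t) (1, 0, 0)
             + u 0 z t * fderiv ℝ (fderiv ℝ u3) (0, z, t) (1, 0, 0) (1, 0, 0))
          + (fderiv ℝ w3 (0, z, t) (1, 0, 0) * fderiv ℝ u3 (0, z, t) (0, 1, 0)
             + w 0 z t * fderiv ℝ (fderiv ℝ u3) (0, z, t) (1, 0, 0) (0, 1, 0))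
          + fderiv ℝ (fderiv ℝ p2) (0, t) (1, 0) (1, 0)) 0 :=
      ((h1.add (h2a.mul h2b)).add (h3a.mul h3b)).add h4
    have hMzero : (fun x : ℝ => fderiv ℝ u3 (x, z, t) (0, 0, 1)
        + u x z t * fderiv ℝ u3 (x, z, t) (1, 0, 0)
        + w x z t * fderiv ℝ u3 (x, z, t) (0, 1, 0)
        + fderiv ℝ p2 (x, t) (1, 0)) = fun _ => (0:ℝ) := by
      funext x
      have r1 : deriv (fun s => u x z s) t = fderiv ℝ u3 (x, z, t) (0, 0, 1) :=
        (aux_hasDerivAt_comp hu (curve3 x z t)).deriv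
      have r2 : deriv (fun x' => u x' z t) x = fderiv ℝ u3 (x, z, t) (1, 0, 0) :=
        (aux_hasDerivAt_comp hu (curve1 z t x)).deriv
      have r3 : deriv (fun z' => u x z' t) z = fderiv ℝ u3 (x, z, t) (0, 1, 0) :=
        (aux_hasDerivAt_comp hu (curve2 x t z)).deriv
      have r4 : deriv (fun x' => p x' t) x = fderiv ℝ p2 (x, t) (1, 0) :=
        (aux_hasDerivAt_comp hp (curveP t x)).deriv
      have h := hmom x z hz t ht
      rw [r1, r2, r3, r4] at h
      exact h
    have hM0 : HasDerivAt (fun x : ℝ => fderiv ℝ u3 (x, z, t) (0, 0, 1)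
        + u x z t * fderiv ℝ u3 (x, z, t) (1, 0, 0)
        + w x z t * fderiv ℝ u3 (x, z, t) (0, 1, 0)
        + fderiv ℝ p2 (x, t) (1, 0)) 0 0 := by
      rw [hMzero]; exact hasDerivAt_const 0 0
    have hval := hM.unique hM0
    rw [huzero z t, hweven z t, hWz0 z t] at hval
    rw [pow_two]
    linarith
  -- symmetry of mixed partials + divergence : swap x,t
  have hswap13 : ∀ z ∈ Icc (0:ℝ) H, ∀ t ∈ Ioo (0:ℝ) 1,
      fderiv ℝ (fderiv ℝ u3) (0, z, t) (1, 0, 0) (0, 0, 1)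
        = - fderiv ℝ (fderiv ℝ w3) (0, z, t) (0, 0, 1) (0, 1, 0) := by
    intro z hz t ht
    rw [aux_symm hu (0, z, t) (1, 0, 0) (0, 0, 1)]
    have h1 : deriv (fun s : ℝ => fderiv ℝ u3 (0, z, s) (1, 0, 0)) t
        = fderiv ℝ (fderiv ℝ u3) (0, z, t) (0, 0, 1) (1, 0, 0) :=
      (aux_hasDerivAt_fderiv_comp hu (curve3 0 z t) _).deriv
    have h2 : (fun s : ℝ => fderiv ℝ u3 (0, z, s) (1, 0, 0))
        =ᶠ[nhds t] (fun s : ℝ => - fderiv ℝ w3 (0, z, s) (0, 1, 0)) := by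
      filter_upwards [Icc_mem_nhds ht.1 ht.2] with s hs
      exact hdivF 0 z s hz hs
    have h3 : deriv (fun s : ℝ => - fderiv ℝ w3 (0, z, s) (0, 1, 0)) t
        = - fderiv ℝ (fderiv ℝ w3) (0, z, t) (0, 0, 1) (0, 1, 0) :=
      ((aux_hasDerivAt_fderiv_comp hw (curve3 0 z t) ((0:ℝ), (1:ℝ), (0:ℝ))).neg).deriv
    rw [← h1, h2.deriv_eq, h3]
  -- swap x,z
  have hswap12 : ∀ z ∈ Ioo (0:ℝ) H, ∀ t ∈ Icc (0:ℝ) 1,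
      fderiv ℝ (fderiv ℝ u3) (0, z, t) (1, 0, 0) (0, 1, 0)
        = - fderiv ℝ (fderiv ℝ w3) (0, z, t) (0, 1, 0) (0, 1, 0) := by
    intro z hz t ht
    rw [aux_symm hu (0, z, t) (1, 0, 0) (0, 1, 0)]
    have h1 : deriv (fun y : ℝ => fderiv ℝ u3 (0, y, t) (1, 0, 0)) z
        = fderiv ℝ (fderiv ℝ u3) (0, z, t) (0, 1, 0) (1, 0, 0) :=
      (aux_hasDerivAt_fderiv_comp hu (curve2 0 t z) _).deriv
    have h2 : (fun y : ℝ => fderiv ℝ u3 (0, y, t) (1, 0, 0))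
        =ᶠ[nhds z] (fun y : ℝ => - fderiv ℝ w3 (0, y, t) (0, 1, 0)) := by
      filter_upwards [Icc_mem_nhds hz.1 hz.2] with y hy
      exact hdivF 0 y t hy ht
    have h3 : deriv (fun y : ℝ => - fderiv ℝ w3 (0, y, t) (0, 1, 0)) z
        = - fderiv ℝ (fderiv ℝ w3) (0, z, t) (0, 1, 0) (0, 1, 0) :=
      ((aux_hasDerivAt_fderiv_comp hw (curve2 0 t z) ((0:ℝ), (1:ℝ), (0:ℝ))).neg).deriv
    rw [← h1, h2.deriv_eq, h3]
  -- reduced momentum identity at interior points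
  have hstar2 : ∀ z ∈ Ioo (0:ℝ) H, ∀ t ∈ Ioo (0:ℝ) 1,
      - fderiv ℝ (fderiv ℝ w3) (0, z, t) (0, 0, 1) (0, 1, 0)
        + (fderiv ℝ w3 (0, z, t) (0, 1, 0)) ^ 2
        - w 0 z t * fderiv ℝ (fderiv ℝ w3) (0, z, t) (0, 1, 0) (0, 1, 0)
        + fderiv ℝ (fderiv ℝ p2) (0, t) (1, 0) (1, 0) = 0 := by
    intro z hz t ht
    have hzI : z ∈ Icc (0:ℝ) H := Ioo_subset_Icc_self hz
    have htI : t ∈ Icc (0:ℝ) 1 := Ioo_subset_Icc_self ht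
    have h := hstar z hzI t htI
    rw [hswap13 z hzI t ht, hswap12 z hz t htI, hdivF 0 z t hzI htI, neg_sq] at h
    linarith
  -- extend to all of Icc × Icc by continuity
  have hK : ∀ z ∈ Icc (0:ℝ) H, ∀ t ∈ Icc (0:ℝ) 1,
      - fderiv ℝ (fderiv ℝ w3) (0, z, t) (0, 0, 1) (0, 1, 0)
        + (fderiv ℝ w3 (0, z, t) (0, 1, 0)) ^ 2
        - w 0 z t * fderiv ℝ (fderiv ℝ w3) (0, z, t) (0, 1, 0) (0, 1, 0)
        + fderiv ℝ (fderiv ℝ p2) (0, t) (1, 0) (1, 0) = 0 := by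
    have hKcont : Continuous (fun q : ℝ × ℝ =>
        - fderiv ℝ (fderiv ℝ w3) (0, q.1, q.2) (0, 0, 1) (0, 1, 0)
        + (fderiv ℝ w3 (0, q.1, q.2) (0, 1, 0)) ^ 2
        - w 0 q.1 q.2 * fderiv ℝ (fderiv ℝ w3) (0, q.1, q.2) (0, 1, 0) (0, 1, 0)
        + fderiv ℝ (fderiv ℝ p2) (0, q.2) (1, 0) (1, 0)) := by
      have c1 : Continuous (fun q : ℝ × ℝ =>
          fderiv ℝ (fderiv ℝ w3) (0, q.1, q.2) (0, 0, 1) (0, 1, 0)) :=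
        (aux_cont2 hw _ _).comp hcq
      have c2 : Continuous (fun q : ℝ × ℝ => fderiv ℝ w3 (0, q.1, q.2) (0, 1, 0)) :=
        (aux_cont1 hw _).comp hcq
      have c3 : Continuous (fun q : ℝ × ℝ => w 0 q.1 q.2) := hw.continuous.comp hcq
      have c4 : Continuous (fun q : ℝ × ℝ =>
          fderiv ℝ (fderiv ℝ w3) (0, q.1, q.2) (0, 1, 0) (0, 1, 0)) :=
        (aux_cont2 hw _ _).comp hcq
      have c5 : Continuous (fun q : ℝ × ℝ => fderiv ℝ (fderiv ℝ p2) (0, q.2) (1, 0) (1, 0)) :=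
        (aux_cont2 hp _ _).comp (continuous_const.prodMk continuous_snd)
      exact ((c1.neg.add (c2.pow 2)).sub (c3.mul c4)).add c5
    have hEq : EqOn (fun q : ℝ × ℝ =>
        - fderiv ℝ (fderiv ℝ w3) (0, q.1, q.2) (0, 0, 1) (0, 1, 0)
        + (fderiv ℝ w3 (0, q.1, q.2) (0, 1, 0)) ^ 2
        - w 0 q.1 q.2 * fderiv ℝ (fderiv ℝ w3) (0, q.1, q.2) (0, 1, 0) (0, 1, 0)
        + fderiv ℝ (fderiv ℝ p2) (0, q.2) (1, 0) (1, 0)) (fun _ => (0:ℝ))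
        (Ioo 0 H ×ˢ Ioo 0 1) := fun q hq => hstar2 q.1 hq.1 q.2 hq.2
    have hcl := hEq.closure hKcont continuous_const
    intro z hz t ht
    have hmem : (z, t) ∈ closure (Ioo (0:ℝ) H ×ˢ Ioo (0:ℝ) 1) := by
      rw [closure_prod_eq, closure_Ioo hH.ne, closure_Ioo (zero_ne_one)]
      exact ⟨hz, ht⟩
    exact hcl hmem
  -- FTC：∫ ∂t∂z w = 0
  have hItz : ∀ t ∈ Ioo (0:ℝ) 1,
      (∫ y in (0:ℝ)..H, fderiv ℝ (fderiv ℝ w3) (0, y, t) (0, 0, 1) (0, 1, 0)) = 0 := by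
    intro t ht
    have htI : t ∈ Icc (0:ℝ) 1 := Ioo_subset_Icc_self ht
    have hcongr : EqOn (fun y : ℝ => fderiv ℝ (fderiv ℝ w3) (0, y, t) (0, 0, 1) (0, 1, 0))
        (fun y : ℝ => fderiv ℝ (fderiv ℝ w3) (0, y, t) (0, 1, 0) (0, 0, 1)) (Set.uIcc 0 H) :=
      fun y _ => aux_symm hw _ _ _
    rw [intervalIntegral.integral_congr hcongr]
    have hftc := intervalIntegral.integral_eq_sub_of_hasDerivAt
      (f := fun y => fderiv ℝ w3 (0, y, t) (0, 0, 1))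
      (f' := fun y => fderiv ℝ (fderiv ℝ w3) (0, y, t) (0, 1, 0) (0, 0, 1))
      (fun y _ => aux_hasDerivAt_fderiv_comp hw (curve2 0 t y) _)
      (((aux_cont2 hw _ _).comp (hcy t)).intervalIntegrable 0 H)
    rw [hftc]
    have e0 : fderiv ℝ w3 (0, 0, t) (0, 0, 1) = 0 := by
      have h1 : deriv (fun s : ℝ => w 0 0 s) t = fderiv ℝ w3 (0, 0, t) (0, 0, 1) :=
        (aux_hasDerivAt_comp hw (curve3 0 0 t)).deriv
      rw [← h1]
      have h2 : (fun s : ℝ => w 0 0 s) =ᶠ[nhds t] (fun _ => (0:ℝ)) := by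
        filter_upwards [Icc_mem_nhds ht.1 ht.2] with s hs
        exact (hbc 0 s hs).1
      rw [h2.deriv_eq, deriv_const]
    have eH : fderiv ℝ w3 (0, H, t) (0, 0, 1) = 0 := by
      have h1 : deriv (fun s : ℝ => w 0 H s) t = fderiv ℝ w3 (0, H, t) (0, 0, 1) :=
        (aux_hasDerivAt_comp hw (curve3 0 H t)).deriv
      rw [← h1]
      have h2 : (fun s : ℝ => w 0 H s) =ᶠ[nhds t] (fun _ => (0:ℝ)) := by
        filter_upwards [Icc_mem_nhds ht.1 ht.2] with s hs
        exact (hbc 0 s hs).2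
      rw [h2.deriv_eq, deriv_const]
    beta_reduce
    rw [e0, eH]
    ring
  -- FTC：integration by parts
  have hIbp : ∀ t ∈ Icc (0:ℝ) 1,
      (∫ y in (0:ℝ)..H, ((fderiv ℝ w3 (0, y, t) (0, 1, 0)) ^ 2
        + w 0 y t * fderiv ℝ (fderiv ℝ w3) (0, y, t) (0, 1, 0) (0, 1, 0))) = 0 := by
    intro t ht
    have hftc := intervalIntegral.integral_eq_sub_of_hasDerivAt
      (f := fun y => w 0 y t * fderiv ℝ w3 (0, y, t) (0, 1, 0))
      (f' := fun y => (fderiv ℝ w3 (0, y, t) (0, 1, 0)) ^ 2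
        + w 0 y t * fderiv ℝ (fderiv ℝ w3) (0, y, t) (0, 1, 0) (0, 1, 0))
      (fun y _ => by
        beta_reduce
        rw [pow_two]
        exact (aux_hasDerivAt_comp hw (curve2 0 t y)).mul
          (aux_hasDerivAt_fderiv_comp hw (curve2 0 t y) _))
      ((((((aux_cont1 hw _).comp (hcy t)).pow 2)).add
        ((hw.continuous.comp (hcy t)).mul ((aux_cont2 hw _ _).comp (hcy t)))).intervalIntegrable 0 H)
    rw [hftc]
    beta_reduce
    rw [(hbc 0 t ht).1, (hbc 0 t ht).2]
    ring
  -- determine the pressure term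
  have hQ : ∀ t ∈ Ioo (0:ℝ) 1,
      fderiv ℝ (fderiv ℝ p2) (0, t) (1, 0) (1, 0)
        = -((2 / H) * ∫ y in (0:ℝ)..H, (fderiv ℝ w3 (0, y, t) (0, 1, 0)) ^ 2) := by
    intro t ht
    have htI : t ∈ Icc (0:ℝ) 1 := Ioo_subset_Icc_self ht
    have i1 : IntervalIntegrable
        (fun y : ℝ => fderiv ℝ (fderiv ℝ w3) (0, y, t) (0, 0, 1) (0, 1, 0)) volume 0 H :=
      (((aux_cont2 hw _ _).comp (hcy t))).intervalIntegrable 0 H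
    have i2 : IntervalIntegrable
        (fun y : ℝ => (fderiv ℝ w3 (0, y, t) (0, 1, 0)) ^ 2) volume 0 H :=
      ((((aux_cont1 hw _).comp (hcy t))).pow 2).intervalIntegrable 0 H
    have i3 : IntervalIntegrable
        (fun y : ℝ => w 0 y t * fderiv ℝ (fderiv ℝ w3) (0, y, t) (0, 1, 0) (0, 1, 0)) volume 0 H :=
      ((hw.continuous.comp (hcy t)).mul ((aux_cont2 hw _ _).comp (hcy t))).intervalIntegrable 0 H
    -- pointwise, the first three terms equal minus the pressure term
    have hpt : EqOn (fun y : ℝ =>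
        fderiv ℝ (fderiv ℝ w3) (0, y, t) (0, 0, 1) (0, 1, 0)
        - (fderiv ℝ w3 (0, y, t) (0, 1, 0)) ^ 2
        + w 0 y t * fderiv ℝ (fderiv ℝ w3) (0, y, t) (0, 1, 0) (0, 1, 0))
        (fun _ : ℝ => fderiv ℝ (fderiv ℝ p2) (0, t) (1, 0) (1, 0)) (Set.uIcc 0 H) := by
      intro y hy
      rw [Set.uIcc_of_le hH.le] at hy
      have h := hK y hy t htI
      simp only
      linarith
    have hint : ∫ y in (0:ℝ)..H,
        (fderiv ℝ (fderiv ℝ w3) (0, y, t) (0, 0, 1) (0, 1, 0)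
        - (fderiv ℝ w3 (0, y, t) (0, 1, 0)) ^ 2
        + w 0 y t * fderiv ℝ (fderiv ℝ w3) (0, y, t) (0, 1, 0) (0, 1, 0))
        = H * fderiv ℝ (fderiv ℝ p2) (0, t) (1, 0) (1, 0) := by
      rw [intervalIntegral.integral_congr hpt, intervalIntegral.integral_const]
      simp [smul_eq_mul]
    rw [intervalIntegral.integral_add (i1.sub i2) i3,
      intervalIntegral.integral_sub i1 i2, hItz t ht] at hint
    have hbp := hIbp t htI
    rw [intervalIntegral.integral_add i2 i3] at hbp
    have hHne : H ≠ 0 := hH.ne'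
    field_simp
    nlinarith [hint, hbp]
  -- continuity of the nonlocal term
  have hJcont : Continuous (fun t : ℝ =>
      ∫ y in (0:ℝ)..H, (fderiv ℝ w3 (0, y, t) (0, 1, 0)) ^ 2) := by
    have hunc : Continuous (Function.uncurry
        (fun (t : ℝ) (y : ℝ) => (fderiv ℝ w3 (0, y, t) (0, 1, 0)) ^ 2)) := by
      have hswap : Continuous (fun q : ℝ × ℝ => ((0:ℝ), q.2, q.1)) :=
        continuous_const.prodMk (continuous_snd.prodMk continuous_fst)
      exact ((aux_cont1 hw _).comp hswap).pow 2
    exact intervalIntegral.continuous_parametric_intervalIntegral_of_continuous' hunc 0 H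
  -- the reduced equation, on Icc × Ioo
  have hmain : ∀ z ∈ Icc (0:ℝ) H, ∀ t ∈ Ioo (0:ℝ) 1,
      fderiv ℝ (fderiv ℝ w3) (0, z, t) (0, 0, 1) (0, 1, 0)
        - (fderiv ℝ w3 (0, z, t) (0, 1, 0)) ^ 2
        + w 0 z t * fderiv ℝ (fderiv ℝ w3) (0, z, t) (0, 1, 0) (0, 1, 0)
        + (2 / H) * (∫ y in (0:ℝ)..H, (fderiv ℝ w3 (0, y, t) (0, 1, 0)) ^ 2) = 0 := by
    intro z hz t ht
    have h1 := hK z hz t (Ioo_subset_Icc_self ht)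
    have h2 := hQ t ht
    rw [h2] at h1
    linarith
  -- extend to Icc × Ico by continuity
  have hmain2 : ∀ z ∈ Icc (0:ℝ) H, ∀ t ∈ Ico (0:ℝ) 1,
      fderiv ℝ (fderiv ℝ w3) (0, z, t) (0, 0, 1) (0, 1, 0)
        - (fderiv ℝ w3 (0, z, t) (0, 1, 0)) ^ 2
        + w 0 z t * fderiv ℝ (fderiv ℝ w3) (0, z, t) (0, 1, 0) (0, 1, 0)
        + (2 / H) * (∫ y in (0:ℝ)..H, (fderiv ℝ w3 (0, y, t) (0, 1, 0)) ^ 2) = 0 := by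
    have hcont : Continuous (fun q : ℝ × ℝ =>
        fderiv ℝ (fderiv ℝ w3) (0, q.1, q.2) (0, 0, 1) (0, 1, 0)
        - (fderiv ℝ w3 (0, q.1, q.2) (0, 1, 0)) ^ 2
        + w 0 q.1 q.2 * fderiv ℝ (fderiv ℝ w3) (0, q.1, q.2) (0, 1, 0) (0, 1, 0)
        + (2 / H) * (∫ y in (0:ℝ)..H, (fderiv ℝ w3 (0, y, q.2) (0, 1, 0)) ^ 2)) := by
      have c1 : Continuous (fun q : ℝ × ℝ =>
          fderiv ℝ (fderiv ℝ w3) (0, q.1, q.2) (0, 0, 1) (0, 1, 0)) :=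
        (aux_cont2 hw _ _).comp hcq
      have c2 : Continuous (fun q : ℝ × ℝ => fderiv ℝ w3 (0, q.1, q.2) (0, 1, 0)) :=
        (aux_cont1 hw _).comp hcq
      have c3 : Continuous (fun q : ℝ × ℝ => w 0 q.1 q.2) := hw.continuous.comp hcq
      have c4 : Continuous (fun q : ℝ × ℝ =>
          fderiv ℝ (fderiv ℝ w3) (0, q.1, q.2) (0, 1, 0) (0, 1, 0)) :=
        (aux_cont2 hw _ _).comp hcq
      have c5 : Continuous (fun q : ℝ × ℝ =>
          (2 / H) * (∫ y in (0:ℝ)..H, (fderiv ℝ w3 (0, y, q.2) (0, 1, 0)) ^ 2)) :=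
        continuous_const.mul (hJcont.comp continuous_snd)
      exact ((c1.sub (c2.pow 2)).add (c3.mul c4)).add c5
    have hEq : EqOn (fun q : ℝ × ℝ =>
        fderiv ℝ (fderiv ℝ w3) (0, q.1, q.2) (0, 0, 1) (0, 1, 0)
        - (fderiv ℝ w3 (0, q.1, q.2) (0, 1, 0)) ^ 2
        + w 0 q.1 q.2 * fderiv ℝ (fderiv ℝ w3) (0, q.1, q.2) (0, 1, 0) (0, 1, 0)
        + (2 / H) * (∫ y in (0:ℝ)..H, (fderiv ℝ w3 (0, y, q.2) (0, 1, 0)) ^ 2))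
        (fun _ => (0:ℝ)) (Icc 0 H ×ˢ Ioo 0 1) := fun q hq => hmain q.1 hq.1 q.2 hq.2
    have hcl := hEq.closure hcont continuous_const
    intro z hz t ht
    have hmem : (z, t) ∈ closure (Icc (0:ℝ) H ×ˢ Ioo (0:ℝ) 1) := by
      rw [closure_prod_eq, isClosed_Icc.closure_eq, closure_Ioo (zero_ne_one)]
      exact ⟨hz, ⟨ht.1, ht.2.le⟩⟩
    exact hcl hmem
  -- translation between deriv and fderiv forms
  have t1 : ∀ z t : ℝ, deriv (fun y => w 0 y t) z = fderiv ℝ w3 (0, z, t) (0, 1, 0) :=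
    fun z t => (aux_hasDerivAt_comp hw (curve2 0 t z)).deriv
  have t2 : ∀ z t : ℝ, deriv (fun s => deriv (fun y => w 0 y s) z) t
      = fderiv ℝ (fderiv ℝ w3) (0, z, t) (0, 0, 1) (0, 1, 0) := by
    intro z t
    have e : (fun s => deriv (fun y => w 0 y s) z)
        = fun s => fderiv ℝ w3 (0, z, s) (0, 1, 0) := funext fun s => t1 z s
    rw [e]
    exact (aux_hasDerivAt_fderiv_comp hw (curve3 0 z t) _).deriv
  have t3 : ∀ z t : ℝ, deriv (deriv (fun y => w 0 y t)) z
      = fderiv ℝ (fderiv ℝ w3) (0, z, t) (0, 1, 0) (0, 1, 0) := by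
    intro z t
    have e : deriv (fun y => w 0 y t) = fun y => fderiv ℝ w3 (0, y, t) (0, 1, 0) :=
      funext fun y => t1 y t
    rw [e]
    exact (aux_hasDerivAt_fderiv_comp hw (curve2 0 t z) _).deriv
  have t4 : ∀ t : ℝ, (∫ y in (0:ℝ)..H, (deriv (fun y' => w 0 y' t) y) ^ 2)
      = ∫ y in (0:ℝ)..H, (fderiv ℝ w3 (0, y, t) (0, 1, 0)) ^ 2 :=
    fun t => intervalIntegral.integral_congr fun y _ => by rw [t1 y t]
  -- hypotheses of the uniqueness theorem for W₁ = w(0,·,·)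
  have hreg1 : ContDiffOn ℝ 2 (Function.uncurry (fun z t => w 0 z t))
      (Set.Icc 0 H ×ˢ Set.Ico 0 1) :=
    ((hw.of_le (WithTop.coe_le_coe.mpr (le_top : (2:ℕ∞) ≤ ⊤))).comp
      (contDiff_const.prodMk (contDiff_fst.prodMk contDiff_snd))).contDiffOn
  have hpde1 : ∀ z ∈ Set.Icc (0:ℝ) H, ∀ t ∈ Set.Ico (0:ℝ) 1,
      deriv (fun s => deriv (fun y => w 0 y s) z) t
        - (deriv (fun y => w 0 y t) z) ^ 2
        + w 0 z t * deriv (deriv (fun y => w 0 y t)) z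
        + (2 / H) * ∫ y in (0:ℝ)..H, (deriv (fun y' => w 0 y' t) y) ^ 2 = 0 := by
    intro z hz t ht
    rw [t2 z t, t1 z t, t3 z t, t4 t]
    exact hmain2 z hz t ht
  have hbc1 : ∀ t ∈ Set.Ico (0:ℝ) 1, w 0 0 t = 0 ∧ w 0 H t = 0 :=
    fun t ht => hbc 0 t ⟨ht.1, ht.2.le⟩
  -- hypotheses for W₂ = φ(z)/(1-t)
  have hreg2 : ContDiffOn ℝ 2 (Function.uncurry (fun z t => φ z / (1 - t)))
      (Set.Icc 0 H ×ˢ Set.Ico 0 1) := by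
    apply ContDiffOn.div
    · exact hφreg.comp contDiff_fst.contDiffOn (fun q hq => hq.1)
    · exact (contDiff_const.sub contDiff_snd).contDiffOn
    · rintro ⟨z, t⟩ ⟨hz, ht⟩
      have : t < 1 := ht.2
      intro hcon
      simp only at hcon
      linarith [sub_eq_zero.mp hcon]
  have hpde2 : ∀ z ∈ Set.Icc (0:ℝ) H, ∀ t ∈ Set.Ico (0:ℝ) 1,
      deriv (fun s => deriv (fun y => φ y / (1 - s)) z) t
        - (deriv (fun y => φ y / (1 - t)) z) ^ 2
        + (φ z / (1 - t)) * deriv (deriv (fun y => φ y / (1 - t))) z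
        + (2 / H) * ∫ y in (0:ℝ)..H, (deriv (fun y' => φ y' / (1 - t)) y) ^ 2 = 0 := by
    intro z hz t ht
    have hne : (1:ℝ) - t ≠ 0 := ne_of_gt (by linarith [ht.2])
    have d1 : ∀ y : ℝ, deriv (fun y' => φ y' / (1 - t)) y = deriv φ y / (1 - t) :=
      fun y => deriv_div_const _
    have d2 : (fun s => deriv (fun y => φ y / (1 - s)) z)
        = fun s => deriv φ z / (1 - s) := funext fun s => deriv_div_const _
    have hdd : HasDerivAt (fun s : ℝ => deriv φ z / (1 - s))
        (deriv φ z * (-(-1) / (1 - t) ^ 2)) t := by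
      have h0 : HasDerivAt (fun s : ℝ => 1 - s) (-1) t := (hasDerivAt_id t).const_sub 1
      have h1 := (h0.inv hne).const_mul (deriv φ z)
      simpa [div_eq_mul_inv] using h1
    have d3 : deriv (fun s : ℝ => deriv φ z / (1 - s)) t = deriv φ z / (1 - t) ^ 2 := by
      rw [hdd.deriv]; ring
    have d4 : deriv (deriv (fun y => φ y / (1 - t))) z = deriv (deriv φ) z / (1 - t) := by
      have e : deriv (fun y => φ y / (1 - t)) = fun y => deriv φ y / (1 - t) :=
        funext fun y => deriv_div_const _
      rw [e]
      exact deriv_div_const _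
    have d5 : (∫ y in (0:ℝ)..H, (deriv (fun y' => φ y' / (1 - t)) y) ^ 2)
        = (∫ y in (0:ℝ)..H, (deriv φ y) ^ 2) / (1 - t) ^ 2 := by
      rw [← intervalIntegral.integral_div]
      apply intervalIntegral.integral_congr
      intro y _
      beta_reduce
      rw [d1 y, div_pow]
    rw [d2, d3, d1 z, d4, d5]
    have h0 := hφode z hz
    have key : deriv φ z / (1 - t) ^ 2 - (deriv φ z / (1 - t)) ^ 2
        + (φ z / (1 - t)) * (deriv (deriv φ) z / (1 - t))
        + (2 / H) * ((∫ y in (0:ℝ)..H, (deriv φ y) ^ 2) / (1 - t) ^ 2)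
        = (deriv φ z - (deriv φ z) ^ 2 + φ z * deriv (deriv φ) z
            + (2 / H) * ∫ y in (0:ℝ)..H, (deriv φ y) ^ 2) / (1 - t) ^ 2 := by
      field_simp
    rw [key, h0, zero_div]
  have hbc2 : ∀ t ∈ Set.Ico (0:ℝ) 1, φ 0 / (1 - t) = 0 ∧ φ H / (1 - t) = 0 :=
    fun t _ => ⟨by rw [hφbc0, zero_div], by rw [hφbcH, zero_div]⟩
  have hinit12 : ∀ z ∈ Set.Icc (0:ℝ) H, w 0 z 0 = φ z / (1 - 0) := by
    intro z _
    rw [(hinit 0 z).2]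
    norm_num
  have hkey := huniq (fun z t => w 0 z t) (fun z t => φ z / (1 - t))
    hreg1 hreg2 hpde1 hpde2 hbc1 hbc2 hinit12
  refine ⟨hkey, ?_⟩
  -- blowup contradiction
  obtain ⟨z₀, hz₀, hz₀ne⟩ := hφnt
  have hcont : Continuous (fun t : ℝ => w 0 z₀ t) :=
    hw.continuous.comp
      (continuous_const.prodMk (continuous_const.prodMk continuous_id))
  obtain ⟨C, hC⟩ := (isCompact_Icc (a := (0:ℝ)) (b := 1)).exists_bound_of_continuousOn
    hcont.continuousOn
  set ε : ℝ := min (1/2) (|φ z₀| / (|C| + 1)) with hεdef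
  have hεpos : 0 < ε := lt_min (by norm_num)
    (div_pos (abs_pos.mpr hz₀ne) (by positivity))
  have hεle : ε ≤ |φ z₀| / (|C| + 1) := min_le_right _ _
  have hεhalf : ε ≤ 1/2 := min_le_left _ _
  have ht1 : (1 - ε) ∈ Set.Ico (0:ℝ) 1 := ⟨by linarith, by linarith⟩
  have heq : w 0 z₀ (1 - ε) = φ z₀ / (1 - (1 - ε)) := hkey z₀ hz₀ (1 - ε) ht1
  have hb := hC (1 - ε) ⟨by linarith, by linarith⟩
  rw [heq] at hb
  have hval : ‖φ z₀ / (1 - (1 - ε))‖ = |φ z₀| / ε := by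
    rw [show (1:ℝ) - (1 - ε) = ε by ring, Real.norm_eq_abs, abs_div, abs_of_pos hεpos]
  rw [hval] at hb
  have hgr : |C| + 1 ≤ |φ z₀| / ε := by
    rw [le_div_iff₀ hεpos]
    calc (|C| + 1) * ε ≤ (|C| + 1) * (|φ z₀| / (|C| + 1)) := by
          apply mul_le_mul_of_nonneg_left hεle (by positivity)
      _ = |φ z₀| := by field_simp
  linarith [le_abs_self C]
end
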